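/- arXiv:math/0203096 — 4 statements merged into one kernel-verified Lean document; each statement's English description precedes it below -/
import Mathlib

section
/- Let φ : Z[x_1,…,x_n, y_1,…,y_n] → Z[x_1,…,x_n] be the ring map with φ(x_i) = x_i and φ(y_i) = −x_i. For a column basis C = {a_{i_1},…,a_{i_d}} of a d×n matrix A and generic θ ∈ Z^d with θ = ∑_j λ_j a_{i_j} (all λ_j ≠ 0), set σ(C,θ) = {x_{i_j} : λ_j > 0} ∪ {y_{i_j} : λ_j < 0}. Then φ(⟨σ(C,θ)⟩) = ⟨x_i : i ∈ C⟩, and hence the image under φ of the intersection ∩_C ⟨σ(C,θ)⟩ over all column bases C equals the matroid ideal M*(A) = ∩_C ⟨x_i : i ∈ C⟩, independently of θ. -/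
open MvPolynomial

/-!
`φ` sends every variable to `± xᵢ`, which gives `φ⟨σ(C,θ)⟩ = ⟨xᵢ : i ∈ C⟩` and the inclusion of
`φ(⋂ ⟨σ(C,θ)⟩)` in `M*(A)`. Conversely, it suffices to lift every monomial `x^m` of an element
of `M*(A)`; its support `T` meets every column basis. If `θ` were in the span of the columns
outside `T`, a column basis extending a basis of that span would expand `θ` with a zero
coefficient, against genericity. So some functional `ξ` vanishes on the columns outside `T` and
is positive at `θ`. Lift `x^m` by replacing `xᵢ` with `xᵢ` or `-yᵢ` according to the sign of
`ξ(aᵢ)`: since `ξ(θ) = ∑ λⱼ ξ(a_{i_j}) > 0`, every column basis has an index in `T` at which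
`λⱼ` and `ξ(a_{i_j})` have the same sign, which puts the lift in every `⟨σ(C,θ)⟩`.
-/

section Genericity

variable {K V ι : Type*} [Field K] [AddCommGroup V] [Module K V]

theorem LinearIndependent.coeff_eq_zero_of_sum_mem_span {κ : Type*} [Fintype κ] {w : κ → V}
    (hw : LinearIndependent K w) {c : κ → K} {J : Set κ}
    (hc : ∑ j, c j • w j ∈ Submodule.span K (w '' J)) {j : κ} (hj : j ∉ J) : c j = 0 := by
  obtain ⟨l, hl, hlc⟩ := (Finsupp.mem_span_image_iff_linearCombination K).mp hc
  have hlc' : l = (Finsupp.linearEquivFunOnFinite K K κ).symm c := hw <| by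
    rw [hlc, Finsupp.linearCombination_eq_fintype_linearCombination_apply,
      Fintype.linearCombination_apply]
  simpa [hlc'] using (Finsupp.mem_supported' K l).mp hl j hj

theorem LinearIndepOn.exists_range_eq_of_span_eq_top [FiniteDimensional K V] {v : ι → V} {b : Set ι}
    (hb : LinearIndepOn K v b) (hspan : Submodule.span K (v '' b) = ⊤) :
    ∃ g : Fin (Module.finrank K V) → ι, Set.range g = b ∧ LinearIndependent K (v ∘ g) := by
  let B := Module.Basis.mk hb.linearIndependent (by rw [← Set.image_eq_range, hspan])
  have := Module.Finite.finite_basis B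
  let e := Finite.equivFinOfCardEq (Module.finrank_eq_nat_card_basis B).symm
  refine ⟨Subtype.val ∘ e.symm, ?_, hb.linearIndependent.comp _ e.symm.injective⟩
  rw [e.symm.surjective.range_comp, Subtype.range_coe]

variable {d : ℕ} {v : ι → V} {θ : V} {lam : (Fin d → ι) → Fin d → K}

theorem notMem_span_image_compl [FiniteDimensional K V] (hd : Module.finrank K V = d)
    (hv : Submodule.span K (Set.range v) = ⊤)
    (hlam : ∀ g : Fin d → ι, LinearIndependent K (v ∘ g) →
      θ = ∑ j, lam g j • v (g j) ∧ ∀ j, lam g j ≠ 0)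
    {T : Set ι} (hT : ∀ g : Fin d → ι, LinearIndependent K (v ∘ g) → ∃ j, g j ∈ T) :
    θ ∉ Submodule.span K (v '' Tᶜ) := by
  subst hd
  intro hθ
  have hb₀ := linearIndepOn_empty K v
  set b₁ := hb₀.extend (Set.empty_subset Tᶜ)
  have hb₁ : LinearIndepOn K v b₁ := hb₀.linearIndepOn_extend _
  obtain ⟨g, hgb, hg⟩ := (hb₁.linearIndepOn_extend (Set.subset_univ _)).exists_range_eq_of_span_eq_top
    (by rw [hb₁.span_image_extend_eq_span_image, Set.image_univ, hv])
  obtain ⟨hθg, hlam0⟩ := hlam g hg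
  obtain ⟨j, hjT⟩ := hT g hg
  refine hlam0 j (hg.coeff_eq_zero_of_sum_mem_span (J := g ⁻¹' b₁) ?_ ?_)
  · rw [Set.image_comp, Set.image_preimage_eq_of_subset (hgb ▸ hb₁.subset_extend _),
      hb₀.span_image_extend_eq_span_image]
    exact hθg ▸ hθ
  · exact fun hj => hb₀.extend_subset (Set.empty_subset Tᶜ) hj hjT

theorem exists_dual_eq_one_of_notMem_span {S : Set V} {x : V} (hx : x ∉ Submodule.span K S) :
    ∃ ξ : Module.Dual K V, ξ x = 1 ∧ ∀ y ∈ S, ξ y = 0 := by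
  obtain ⟨ξ, hξx, hξS⟩ := Submodule.exists_dual_map_eq_bot_of_notMem hx inferInstance
  refine ⟨(ξ x)⁻¹ • ξ, by simp [hξx], fun y hy => ?_⟩
  have : ξ y ∈ (Submodule.span K S).map ξ := Submodule.mem_map_of_mem (Submodule.subset_span hy)
  rw [hξS, Submodule.mem_bot] at this
  simp [this]

theorem exists_dual_sign_agrees_on_every_basis [LinearOrder K] [IsStrictOrderedRing K]
    [FiniteDimensional K V] (hd : Module.finrank K V = d)
    (hlam : ∀ g : Fin d → ι, LinearIndependent K (v ∘ g) →
      θ = ∑ j, lam g j • v (g j) ∧ ∀ j, lam g j ≠ 0)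
    {T : Set ι} (hT : ∀ g : Fin d → ι, LinearIndependent K (v ∘ g) → ∃ j, g j ∈ T) :
    ∃ ξ : Module.Dual K V, ∀ g : Fin d → ι, LinearIndependent K (v ∘ g) →
      ∃ j, g j ∈ T ∧ 0 < lam g j * ξ (v (g j)) := by
  by_cases hbasis : ∃ g₀ : Fin d → ι, LinearIndependent K (v ∘ g₀)
  swap
  · exact ⟨0, fun g hg => (hbasis ⟨g, hg⟩).elim⟩
  obtain ⟨g₀, hg₀⟩ := hbasis
  have hv : Submodule.span K (Set.range v) = ⊤ :=
    top_unique <| (hg₀.span_eq_top_of_card_eq_finrank' (by simp [hd])).ge.trans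
      (Submodule.span_mono (Set.range_comp_subset_range g₀ v))
  obtain ⟨ξ, hξθ, hξT⟩ :=
    exists_dual_eq_one_of_notMem_span (notMem_span_image_compl hd hv hlam hT)
  refine ⟨ξ, fun g hg => ?_⟩
  have hsum : ∑ _j : Fin d, (0 : K) < ∑ j, lam g j * ξ (v (g j)) := by
    rw [Finset.sum_const_zero]
    calc 0 < ξ θ := hξθ ▸ one_pos
      _ = ∑ j, lam g j * ξ (v (g j)) := by simp [(hlam g hg).1, map_sum]
  obtain ⟨j, -, hj⟩ := Finset.exists_lt_of_sum_lt hsum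
  refine ⟨j, by_contra fun hjT => ?_, hj⟩
  rw [hξT _ ⟨g j, hjT, rfl⟩, mul_zero] at hj
  exact hj.false

end Genericity

section SignedVariables

variable {R σ : Type*} [CommRing R]

variable (R σ) in
noncomputable def signedFold : MvPolynomial (σ ⊕ σ) R →ₐ[R] MvPolynomial σ R :=
  aeval (Sum.elim (fun i => X i) (fun i => -X i))

@[simp]
theorem signedFold_X_inl (i : σ) : signedFold R σ (X (Sum.inl i)) = X i := by
  simp [signedFold]

@[simp]
theorem signedFold_X_inr (i : σ) : signedFold R σ (X (Sum.inr i)) = -X i := by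
  simp [signedFold]

theorem map_signedFold_span_X_image (S : Set (σ ⊕ σ)) :
    (Ideal.span (X '' S)).map (signedFold R σ) = Ideal.span (X '' (Sum.elim id id '' S)) := by
  rw [Ideal.map_span, Set.image_image, Set.image_image]
  apply le_antisymm <;> rw [Ideal.span_le] <;> rintro _ ⟨(i | i), hi, rfl⟩
  · exact Ideal.subset_span ⟨Sum.inl i, hi, (signedFold_X_inl i).symm⟩
  · exact neg_mem_iff.mp (Ideal.subset_span ⟨Sum.inr i, hi, by simp⟩)
  · exact Ideal.subset_span ⟨Sum.inl i, hi, signedFold_X_inl i⟩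
  · exact neg_mem_iff.mp (Ideal.subset_span ⟨Sum.inr i, hi, signedFold_X_inr i⟩)

noncomputable def signedLift (ε : σ → Bool) : MvPolynomial σ R →ₐ[R] MvPolynomial (σ ⊕ σ) R :=
  aeval fun i => bif ε i then X (Sum.inl i) else -X (Sum.inr i)

def signedVar (ε : σ → Bool) (i : σ) : σ ⊕ σ :=
  bif ε i then Sum.inl i else Sum.inr i

@[simp]
theorem signedFold_signedLift (ε : σ → Bool) (p : MvPolynomial σ R) :
    signedFold R σ (signedLift ε p) = p := by
  suffices (signedFold R σ).comp (signedLift ε) = AlgHom.id R _ from AlgHom.congr_fun this p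
  refine algHom_ext fun i => ?_
  cases h : ε i <;> simp [signedLift, h]

theorem signedLift_monomial_mem_span {S : Set (σ ⊕ σ)} {ε : σ → Bool} {m : σ →₀ ℕ} (c : R)
    {i : σ} (hi : m i ≠ 0) (hS : signedVar ε i ∈ S) :
    signedLift ε (monomial m c) ∈ Ideal.span (X '' S) := by
  have hXi : signedLift ε (X i : MvPolynomial σ R) ∈ Ideal.span (X '' S) := by
    have hX := Ideal.subset_span (α := MvPolynomial (σ ⊕ σ) R) (Set.mem_image_of_mem X hS)
    cases h : ε i <;> simpa [signedLift, signedVar, h] using hX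
  exact Ideal.mem_of_dvd _ (map_dvd _ (X_dvd_monomial.mpr (Or.inr hi))) hXi

end SignedVariables

section SignedSupport

variable {κ ι K : Type*}

/-- `σ(C, θ)` for the column basis `g` and the coefficients `c` of `θ`: `inl i` stands for the
variable `xᵢ` and `inr i` for `yᵢ`. -/
def signedSupport [Zero K] [LT K] (g : κ → ι) (c : κ → K) : Set (ι ⊕ ι) :=
  {s | ∃ j, (0 < c j ∧ s = Sum.inl (g j)) ∨ (c j < 0 ∧ s = Sum.inr (g j))}

theorem image_X_signedSupport (R : Type*) [CommSemiring R] [Zero K] [LT K] (g : κ → ι)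
    (c : κ → K) :
    (X '' signedSupport g c : Set (MvPolynomial (ι ⊕ ι) R)) =
      {p | ∃ j, (0 < c j ∧ p = X (Sum.inl (g j))) ∨ (c j < 0 ∧ p = X (Sum.inr (g j)))} := by
  ext p
  constructor
  · rintro ⟨_, ⟨j, ⟨hc, rfl⟩ | ⟨hc, rfl⟩⟩, rfl⟩
    exacts [⟨j, .inl ⟨hc, rfl⟩⟩, ⟨j, .inr ⟨hc, rfl⟩⟩]
  · rintro ⟨j, ⟨hc, rfl⟩ | ⟨hc, rfl⟩⟩
    exacts [⟨_, ⟨j, .inl ⟨hc, rfl⟩⟩, rfl⟩, ⟨_, ⟨j, .inr ⟨hc, rfl⟩⟩, rfl⟩]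

theorem elim_image_signedSupport [Zero K] [LinearOrder K] {g : κ → ι} {c : κ → K}
    (hc : ∀ j, c j ≠ 0) : Sum.elim id id '' signedSupport g c = Set.range g := by
  ext i
  constructor
  · rintro ⟨_, ⟨j, ⟨-, rfl⟩ | ⟨-, rfl⟩⟩, rfl⟩ <;> exact ⟨j, rfl⟩
  · rintro ⟨j, rfl⟩
    rcases (hc j).lt_or_gt with hneg | hpos
    · exact ⟨_, ⟨j, .inr ⟨hneg, rfl⟩⟩, rfl⟩
    · exact ⟨_, ⟨j, .inl ⟨hpos, rfl⟩⟩, rfl⟩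

theorem signedVar_mem_signedSupport [Ring K] [LinearOrder K] [IsStrictOrderedRing K]
    {g : κ → ι} {c : κ → K} {w : ι → K} {j : κ} (h : 0 < c j * w (g j)) :
    signedVar (fun i => decide (0 < w i)) (g j) ∈ signedSupport g c := by
  rcases mul_pos_iff.mp h with ⟨hc, hw⟩ | ⟨hc, hw⟩
  · exact ⟨j, .inl ⟨hc, by simp [signedVar, hw]⟩⟩
  · exact ⟨j, .inr ⟨hc, by simp [signedVar, lt_asymm hw]⟩⟩

end SignedSupport

/-- Let `φ` collapse variables by `xᵢ ↦ xᵢ`, `yᵢ ↦ -xᵢ`. For each column basis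
`C = {a_{g 0}, …, a_{g (d-1)}}` of `A` with `θ = ∑ λ_j a_{g j}` (all `λ_j ≠ 0`), set
`σ(C,θ) = {x_{g j} : λ_j > 0} ∪ {y_{g j} : λ_j < 0}`. Then
`φ⟨σ(C,θ)⟩ = ⟨xᵢ : i ∈ C⟩`, and the image under `φ` of the intersection of the ideals
`⟨σ(C,θ)⟩` over all column bases equals `M*(𝒜) = ∩_C ⟨xᵢ : i ∈ C⟩`. -/
theorem stmt_11 (d n : ℕ) (A : Matrix (Fin d) (Fin n) ℚ) (θ : Fin d → ℚ)
    (lam : (Fin d → Fin n) → Fin d → ℚ)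
    (hlam : ∀ g : Fin d → Fin n,
      LinearIndependent ℚ (fun j : Fin d => fun i => A i (g j)) →
      (θ = ∑ j : Fin d, lam g j • (fun i => A i (g j)) ∧ ∀ j, lam g j ≠ 0))
    (φ : MvPolynomial (Fin n ⊕ Fin n) ℤ →+* MvPolynomial (Fin n) ℤ)
    (hφ : φ = (MvPolynomial.aeval (Sum.elim
        (fun i : Fin n => (X i : MvPolynomial (Fin n) ℤ))
        (fun i : Fin n => -X i))).toRingHom) :
    (∀ g : Fin d → Fin n,
        LinearIndependent ℚ (fun j : Fin d => fun i => A i (g j)) →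
        Ideal.map φ (Ideal.span {p : MvPolynomial (Fin n ⊕ Fin n) ℤ | ∃ j : Fin d,
            (0 < lam g j ∧ p = X (Sum.inl (g j))) ∨
            (lam g j < 0 ∧ p = X (Sum.inr (g j)))}) =
          Ideal.span {p : MvPolynomial (Fin n) ℤ | ∃ j : Fin d, p = X (g j)}) ∧
    Ideal.map φ (⨅ (g : Fin d → Fin n)
        (_ : LinearIndependent ℚ (fun j : Fin d => fun i => A i (g j))),
        Ideal.span {p : MvPolynomial (Fin n ⊕ Fin n) ℤ | ∃ j : Fin d,
          (0 < lam g j ∧ p = X (Sum.inl (g j))) ∨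
          (lam g j < 0 ∧ p = X (Sum.inr (g j)))}) =
      ⨅ (g : Fin d → Fin n)
        (_ : LinearIndependent ℚ (fun j : Fin d => fun i => A i (g j))),
        Ideal.span {p : MvPolynomial (Fin n) ℤ | ∃ j : Fin d, p = X (g j)} := by
  obtain rfl : φ = signedFold ℤ (Fin n) := hφ
  have hrange : ∀ g : Fin d → Fin n,
      {p : MvPolynomial (Fin n) ℤ | ∃ j, p = X (g j)} = X '' Set.range g := fun g => by
    rw [← Set.range_comp]
    exact Set.ext fun p => exists_congr fun j => eq_comm
  have hσ : ∀ g : Fin d → Fin n, LinearIndependent ℚ (fun j i => A i (g j)) →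
      (Ideal.span (X '' signedSupport g (lam g))).map (signedFold ℤ (Fin n)) =
        Ideal.span (X '' Set.range g) := fun g hg => by
    rw [map_signedFold_span_X_image, elim_image_signedSupport (hlam g hg).2]
  simp only [← image_X_signedSupport, hrange]
  refine ⟨hσ, le_antisymm (le_iInf₂ fun g hg => ?_) fun f hf => ?_⟩
  · exact (hσ g hg).le.trans' (Ideal.map_mono (iInf₂_le g hg))
  rw [f.as_sum]
  refine Ideal.sum_mem _ fun m hm => ?_
  have hT : ∀ g : Fin d → Fin n, LinearIndependent ℚ (fun j i => A i (g j)) →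
      ∃ j, g j ∈ (m.support : Set (Fin n)) := fun g hg => by
    obtain ⟨_, ⟨j, rfl⟩, hj⟩ :=
      mem_ideal_span_X_image.mp (Ideal.mem_iInf.mp (Ideal.mem_iInf.mp hf g) hg) m hm
    exact ⟨j, Finsupp.mem_support_iff.mpr hj⟩
  obtain ⟨ξ, hξ⟩ := exists_dual_sign_agrees_on_every_basis (v := fun c i => A i c)
    (Module.finrank_fin_fun ℚ) hlam hT
  rw [← signedFold_signedLift (fun i => decide (0 < ξ fun k => A k i)) (monomial m _)]
  refine Ideal.mem_map_of_mem _ (Ideal.mem_iInf.mpr fun g => Ideal.mem_iInf.mpr fun hg => ?_)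
  obtain ⟨j, hjm, hj⟩ := hξ g hg
  exact signedLift_monomial_mem_span _ (Finsupp.mem_support_iff.mp hjm)
    (signedVar_mem_signedSupport hj)
end

section
/- Let A = [a_1 … a_n] be a d×n integer matrix of rank d with no zero column, and suppose the row vectors of a Gale dual B are all nonzero. Then the ideal Circ(B) = ⟨∑_{i=1}^n a_{ij} z_i w_i : j = 1,…,d⟩ in C[z_1,…,z_n,w_1,…,w_n] is a complete intersection of codimension d (its generators form a regular sequence). -/
/-!
Since `A` has a right inverse over `ℤ`, its rows are linearly independent over `ℂ`. Whether the
next generator `circ c` is regular modulo the earlier ones depends only on the span `V` of the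
earlier rows, and `c ∉ V`. Pick `v ∈ V` with `v p = 1`: after clearing the coordinate `p` in `c`
and in the rest of `V`, the ring splits as `E[z_p, w_p]` with `E` the polynomial ring in the
remaining variables, `circ v` becomes `z_p w_p + g` with `g ∈ E`, and everything else lies in
`E`. Induction on `dim V` then reduces to: if `f` is regular modulo `J` in `E`, then `f` is
regular modulo `J·E[z,w] + (z w + g)`. This holds because `z w + g` has leading coefficient `1`
for any monomial order, so it is a nonzerodivisor over every quotient of `E`.
-/

open MvPolynomial
open scoped nonZeroDivisors

section QuotientRegular

variable {R S : Type*} [CommRing R] [CommRing S]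

lemma IsSMulRegular.quotient_of_sub_mem {I : Ideal R} {r r' : R}
    (hr' : IsSMulRegular (R ⧸ I) r') (h : r - r' ∈ I) : IsSMulRegular (R ⧸ I) r := by
  have : Ideal.Quotient.mk I r = Ideal.Quotient.mk I r' := Ideal.Quotient.eq.2 h
  intro x y hxy
  simp only [Algebra.smul_def, Ideal.Quotient.algebraMap_eq, this] at hxy
  exact hr' (by simpa only [Algebra.smul_def, Ideal.Quotient.algebraMap_eq] using hxy)

lemma isSMulRegular_quotient_map_ringEquiv_iff {F : Type*} [EquivLike F R S]
    [RingEquivClass F R S] (e : F) (I : Ideal R) (r : R) :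
    IsSMulRegular (S ⧸ I.map e) (e r) ↔ IsSMulRegular (R ⧸ I) r := by
  simp only [isSMulRegular_quotient_iff_mem_of_smul_mem, smul_eq_mul]
  rw [(EquivLike.surjective e).forall]
  simp only [← map_mul, Ideal.mem_map_of_equiv, EquivLike.apply_eq_iff_eq, exists_eq_right]

end QuotientRegular

section PolynomialExtension

variable {E τ : Type*} [CommRing E]

lemma IsSMulRegular.quotient_map_C {J : Ideal E} {f : E} (hf : IsSMulRegular (E ⧸ J) f) :
    IsSMulRegular (MvPolynomial τ E ⧸ J.map C) (C f : MvPolynomial τ E) := by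
  rw [isSMulRegular_quotient_iff_mem_of_smul_mem] at hf ⊢
  intro q hq
  rw [smul_eq_mul, mem_map_C_iff] at hq
  exact mem_map_C_iff.2 fun m => hf _ (by simpa only [coeff_C_mul, smul_eq_mul] using hq m)

lemma MvPolynomial.X_mul_X_add_C_mem_nonZeroDivisors [Finite τ] (a b : τ) (g : E) :
    X a * X b + C g ∈ (MvPolynomial τ E)⁰ := by
  nontriviality E
  classical
  let : LinearOrder τ := linearOrderOfSTO WellOrderingRel
  let m : MonomialOrder τ := .lex
  apply m.mem_nonZeroDivisors_of_leadingCoeff_mem_nonZeroDivisors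
  have hdeg : m.toSyn (m.degree (C g : MvPolynomial τ E)) <
      m.toSyn (m.degree (X a * X b : MvPolynomial τ E)) := by
    rw [m.degree_C, m.degree_mul_of_left_mem_nonZeroDivisors (by simp) (X_ne_zero (R := E) b),
      m.degree_X (R := E), m.degree_X (R := E), map_zero, m.toSyn_lt_iff_ne_zero, ne_eq,
      m.toSyn_eq_zero_iff]
    simp
  rw [m.leadingCoeff_add_of_lt hdeg, m.leadingCoeff_mul_of_left_mem_nonZeroDivisors (by simp),
    m.leadingCoeff_X, m.leadingCoeff_X, one_mul]
  exact one_mem _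

lemma IsSMulRegular.quotient_map_C_sup_span {J : Ideal E} {f : E} (hf : IsSMulRegular (E ⧸ J) f)
    {h : MvPolynomial τ E}
    (hh : map (Ideal.Quotient.mk (J ⊔ Ideal.span {f})) h ∈
      (MvPolynomial τ (E ⧸ (J ⊔ Ideal.span {f})))⁰) :
    IsSMulRegular (MvPolynomial τ E ⧸ (J.map C ⊔ Ideal.span {h})) (C f : MvPolynomial τ E) := by
  have hJ := hf.quotient_map_C (τ := τ)
  rw [isSMulRegular_quotient_iff_mem_of_smul_mem] at hJ ⊢
  intro q hq
  obtain ⟨j, hj, _, hu, hjq⟩ := Submodule.mem_sup.1 hq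
  obtain ⟨u, rfl⟩ := Ideal.mem_span_singleton'.1 hu
  rw [smul_eq_mul] at hjq
  -- `u * h ≡ C f * q ≡ 0` modulo `J + (f)`, where `h` is a nonzerodivisor
  have hu : u ∈ (J ⊔ Ideal.span {f}).map C := by
    rw [← Ideal.mk_ker (I := J ⊔ _), ← ker_map, RingHom.mem_ker]
    refine (mul_right_mem_nonZeroDivisors_eq_zero_iff hh).1 ?_
    rw [← map_mul, ← RingHom.mem_ker, ker_map, Ideal.mk_ker, eq_sub_of_add_eq' hjq]
    exact sub_mem (Ideal.mul_mem_right _ _ (Ideal.mem_map_of_mem _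
      (Ideal.mem_sup_right (Ideal.mem_span_singleton_self f)))) (Ideal.map_mono le_sup_left hj)
  rw [Ideal.map_sup, Ideal.map_span, Set.image_singleton] at hu
  obtain ⟨j', hj', _, hw, rfl⟩ := Submodule.mem_sup.1 hu
  obtain ⟨w, rfl⟩ := Ideal.mem_span_singleton'.1 hw
  have hqw : q - w * h ∈ J.map C := hJ _ <| by
    rw [smul_eq_mul, show C f * (q - w * h) = j + j' * h by linear_combination -hjq]
    exact add_mem hj (Ideal.mul_mem_right _ _ hj')
  simpa using add_mem (Ideal.mem_sup_left hqw)
    (Ideal.mem_sup_right (Ideal.mul_mem_left _ w (Ideal.mem_span_singleton_self h)))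

end PolynomialExtension

lemma Submodule.eq_span_insert_inf_ker {R M : Type*} [Ring R] [AddCommGroup M] [Module R M]
    {V : Submodule R M} {φ : M →ₗ[R] R} {v : M} (hv : v ∈ V) (hφv : φ v = 1) :
    V = span R (insert v (V ⊓ LinearMap.ker φ : Set M)) := by
  refine le_antisymm (fun x hx => ?_) (span_le.2 (Set.insert_subset hv inf_le_left))
  rw [← sub_add_cancel x (φ x • v)]
  refine add_mem (subset_span (Set.mem_insert_of_mem _ ?_))
    (smul_mem _ _ (subset_span (Set.mem_insert _ _)))
  exact ⟨sub_mem hx (V.smul_mem _ hv), by simp [hφv]⟩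

lemma Ideal.span_image_span {K M R : Type*} [CommSemiring K] [Semiring R] [Algebra K R]
    [AddCommMonoid M] [Module K M] (L : M →ₗ[K] R) (s : Set M) :
    Ideal.span (L '' Submodule.span K s) = Ideal.span (L '' s) := by
  refine le_antisymm (Ideal.span_le.2 ?_) (Ideal.span_mono (Set.image_mono Submodule.subset_span))
  rw [← Submodule.map_coe, Submodule.map_span]
  exact Submodule.span_le_restrictScalars K R _

section Circ

variable {K : Type*} [CommSemiring K] {σ : Type*} [Fintype σ]

/-- `circ v = ∑ vᵢ zᵢ wᵢ` with `zᵢ = X (inl i)` and `wᵢ = X (inr i)`; the generators of `Circ(B)`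
are `circ` of the rows of `A`. -/
noncomputable def circ : (σ → K) →ₗ[K] MvPolynomial (σ ⊕ σ) K where
  toFun v := ∑ i, C (v i) * X (Sum.inl i) * X (Sum.inr i)
  map_add' v w := by simp only [Pi.add_apply, map_add, add_mul, Finset.sum_add_distrib]
  map_smul' a v := by
    simp only [Pi.smul_apply, smul_eq_mul, map_mul, RingHom.id_apply, Finset.smul_sum,
      smul_eq_C_mul, mul_assoc]

lemma circ_apply (v : σ → K) : circ v = ∑ i, C (v i) * X (Sum.inl i) * X (Sum.inr i) := rfl

lemma circ_unique [Unique σ] (v : σ → K) :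
    circ v = C (v default) * X (Sum.inl default) * X (Sum.inr default) :=
  Fintype.sum_unique _

lemma eval_circ_single [DecidableEq σ] (v : σ → K) (i : σ) :
    eval (Sum.elim (Pi.single i 1) (Pi.single i 1)) (circ v) = v i := by
  simp [circ_apply, Pi.single_apply]

lemma circ_injective : Function.Injective (circ : (σ → K) → MvPolynomial (σ ⊕ σ) K) := by
  classical
  intro v w h
  funext i
  simpa only [eval_circ_single] using congrArg (eval (Sum.elim (Pi.single i 1) (Pi.single i 1))) h

variable {α β : Type*} [Fintype α] [Fintype β]

noncomputable def circSplitEquiv (e : α ⊕ β ≃ σ) :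
    MvPolynomial (σ ⊕ σ) K ≃ₐ[K] MvPolynomial (α ⊕ α) (MvPolynomial (β ⊕ β) K) :=
  (renameEquiv K ((Equiv.sumCongr e.symm e.symm).trans (Equiv.sumSumSumComm α β α β))).trans
    (sumAlgEquiv K (α ⊕ α) (β ⊕ β))

lemma circSplitEquiv_circ (e : α ⊕ β ≃ σ) (v : σ → K) :
    circSplitEquiv e (circ v) =
      map C (circ (v ∘ e ∘ Sum.inl)) + C (circ (v ∘ e ∘ Sum.inr)) := by
  rw [circ_apply, ← e.sum_comp, Fintype.sum_sum_type]
  simp [circSplitEquiv, circ_apply, map_sum]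

lemma circSplitEquiv_circ_of_forall_eq_zero (e : α ⊕ β ≃ σ) {v : σ → K}
    (hv : ∀ a, v (e (Sum.inl a)) = 0) :
    circSplitEquiv e (circ v) = C (circ (v ∘ e ∘ Sum.inr)) := by
  rw [circSplitEquiv_circ, show v ∘ e ∘ Sum.inl = 0 from funext hv, map_zero, map_zero, zero_add]

lemma circSplitEquiv_circ_of_unique [Unique α] (e : α ⊕ β ≃ σ) (v : σ → K) :
    circSplitEquiv e (circ v) =
      C (C (v (e (Sum.inl default)))) * X (Sum.inl default) * X (Sum.inr default) +
        C (circ (v ∘ e ∘ Sum.inr)) := by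
  rw [circSplitEquiv_circ, circ_unique]
  simp

end Circ

section Shorten

variable {K : Type*} [Field K] {σ : Type*}

/-- The shortened code of the linear code `V` at the coordinate `p`. -/
def Submodule.shorten (p : σ) (V : Submodule K (σ → K)) : Submodule K ({i // ¬ i = p} → K) :=
  (V ⊓ LinearMap.ker (LinearMap.proj p)).map (LinearMap.funLeft K K Subtype.val)

lemma Submodule.finrank_shorten_lt [Finite σ] {p : σ} {V : Submodule K (σ → K)} {v : σ → K}
    (hv : v ∈ V) (hvp : v p ≠ 0) : Module.finrank K (V.shorten p) < Module.finrank K V := by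
  refine (Submodule.finrank_map_le _ _).trans_lt (Submodule.finrank_lt_finrank_of_lt ?_)
  exact SetLike.lt_iff_le_and_exists.2 ⟨inf_le_left, v, hv, fun h => hvp h.2⟩

lemma Submodule.comp_val_notMem_shorten {p : σ} {V : Submodule K (σ → K)} {c v : σ → K}
    (hc : c ∉ V) (hv : v ∈ V) (hvp : v p = 1) : (c - c p • v) ∘ Subtype.val ∉ V.shorten p := by
  rintro ⟨w, hw, hwc⟩
  have : w = c - c p • v := by
    funext i
    by_cases hi : i = p
    · subst hi
      simpa [hvp] using hw.2
    · exact congrFun hwc ⟨i, hi⟩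
  exact hc (by simpa [this] using V.add_mem hw.1 (V.smul_mem (c p) hv))

end Shorten

section CircRegular

variable {K : Type*} [Field K] {σ : Type*} [Fintype σ]

theorem isSMulRegular_circ_of_shorten [DecidableEq σ] {p : σ} {V : Submodule K (σ → K)}
    {c v : σ → K} (hv : v ∈ V) (hvp : v p = 1)
    (hreg : IsSMulRegular (MvPolynomial ({i // ¬ i = p} ⊕ {i // ¬ i = p}) K ⧸
      Ideal.span (circ '' (V.shorten p : Set ({i // ¬ i = p} → K))))
      (circ ((c - c p • v) ∘ (Subtype.val : {i // ¬ i = p} → σ)))) :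
    IsSMulRegular (MvPolynomial (σ ⊕ σ) K ⧸ Ideal.span (circ '' (V : Set (σ → K)))) (circ c) := by
  let Φ := circSplitEquiv (K := K) (Equiv.sumCompl (· = p))
  have hΦ₀ : ∀ w : σ → K, w p = 0 → Φ (circ w) = C (circ (w ∘ Subtype.val)) := fun w hw =>
    circSplitEquiv_circ_of_forall_eq_zero _ (by rintro ⟨i, rfl⟩; exact hw)
  have hΦv : Φ (circ v) =
      X (Sum.inl default) * X (Sum.inr default) + C (circ (v ∘ Subtype.val)) := by
    rw [circSplitEquiv_circ_of_unique]
    simp only [Equiv.sumCompl_apply_inl, (default : {i // i = p}).2, hvp, map_one, one_mul]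
    rfl
  have hreg' := hreg.quotient_map_C_sup_span (h := Φ (circ v)) (by
    rw [hΦv]
    simpa using X_mul_X_add_C_mem_nonZeroDivisors _ _ _)
  have hI : (Ideal.span (circ '' (V : Set (σ → K)))).map Φ =
      (Ideal.span (circ '' (V.shorten p : Set ({i // ¬ i = p} → K)))).map C ⊔
        Ideal.span {Φ (circ v)} := by
    have hV : Ideal.span (circ '' (V : Set (σ → K))) =
        Ideal.span (circ '' insert v ((V ⊓ LinearMap.ker (LinearMap.proj p) :
          Submodule K (σ → K)) : Set (σ → K))) := by
      conv_lhs => rw [Submodule.eq_span_insert_inf_ker hv (φ := LinearMap.proj p) hvp]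
      exact Ideal.span_image_span _ _
    rw [hV, Ideal.map_span, Set.image_image, Set.image_insert_eq, Ideal.span_insert, sup_comm,
      Ideal.map_span, Submodule.shorten, Submodule.map_coe, Set.image_image, Set.image_image]
    congr 2
    exact Set.image_congr fun w hw => hΦ₀ w hw.2
  rw [← isSMulRegular_quotient_map_ringEquiv_iff Φ, hI]
  refine hreg'.quotient_of_sub_mem
    (Ideal.mem_sup_right (Ideal.mem_span_singleton'.2 ⟨C (C (c p)), ?_⟩))
  rw [← hΦ₀ _ (by simp [hvp]), ← map_sub, ← map_sub, sub_sub_cancel, map_smul, map_smul,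
    Algebra.smul_def, MvPolynomial.algebraMap_apply, MvPolynomial.algebraMap_eq]

theorem isSMulRegular_circ_of_notMem (V : Submodule K (σ → K)) {c : σ → K} (hc : c ∉ V) :
    IsSMulRegular (MvPolynomial (σ ⊕ σ) K ⧸ Ideal.span (circ '' (V : Set (σ → K)))) (circ c) := by
  classical
  induction hn : Module.finrank K V using Nat.strong_induction_on generalizing σ V c with
  | _ n ih =>
  obtain rfl | hV := eq_or_ne V ⊥
  · have hc0 : circ c ≠ 0 :=
      (map_ne_zero_iff _ circ_injective).2 (by rintro rfl; exact hc (zero_mem _))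
    rw [isSMulRegular_quotient_iff_mem_of_smul_mem]
    simp [hc0]
  obtain ⟨v, hvV, hv0⟩ := Submodule.exists_mem_ne_zero_of_ne_bot hV
  obtain ⟨p, hp⟩ := Function.ne_iff.1 hv0
  refine isSMulRegular_circ_of_shorten (p := p) (V.smul_mem (v p)⁻¹ hvV)
    (by simp [inv_mul_cancel₀ hp]) ?_
  exact ih _ (hn ▸ Submodule.finrank_shorten_lt hvV hp) _
    (Submodule.comp_val_notMem_shorten hc (V.smul_mem _ hvV) (by simp [inv_mul_cancel₀ hp])) rfl

theorem isRegular_ofFn_circ {d : ℕ} {r : Fin d → σ → K} (hr : LinearIndependent K r) :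
    RingTheory.Sequence.IsRegular (MvPolynomial (σ ⊕ σ) K) (List.ofFn fun j => circ (r j)) := by
  have hofList : ∀ {k} (f : Fin k → MvPolynomial (σ ⊕ σ) K),
      Ideal.ofList (List.ofFn f) = Ideal.span (Set.range f) := by
    intro k f
    simp only [Ideal.ofList, List.mem_ofFn]
    rfl
  refine ⟨(RingTheory.Sequence.isWeaklyRegular_iff _ _).2 fun i hi => ?_, fun htop => ?_⟩
  · rw [List.length_ofFn] at hi
    rw [← Fin.ofFn_take_eq_take_ofFn hi.le, smul_eq_mul, Ideal.mul_top, List.getElem_ofFn, hofList]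
    have hrange : Set.range (Fin.take i hi.le fun j => circ (r j)) =
        circ '' (r '' Set.range (Fin.castLE hi.le)) := by
      rw [Set.image_image, ← Set.range_comp]
      rfl
    rw [hrange, ← Ideal.span_image_span]
    refine isSMulRegular_circ_of_notMem _ (hr.notMem_span_image ?_)
    rintro ⟨j, hj⟩
    exact j.2.ne (by simpa using congrArg Fin.val hj)
  · have hle : Ideal.ofList (List.ofFn fun j => circ (r j)) ≤
        RingHom.ker (constantCoeff : MvPolynomial (σ ⊕ σ) K →+* K) := by
      rw [hofList, Ideal.span_le]
      rintro _ ⟨j, rfl⟩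
      simp [circ_apply]
    rw [smul_eq_mul, Ideal.mul_top, eq_comm, Ideal.eq_top_iff_one] at htop
    simpa using hle htop

end CircRegular

lemma Matrix.linearIndependent_row_map_of_mulVec_surjective {m n R S : Type*} [Fintype m]
    [DecidableEq m] [Fintype n] [CommRing R] [CommRing S] (f : R →+* S) {A : Matrix m n R}
    (hA : Function.Surjective A.mulVec) : LinearIndependent S (A.map f).row := by
  obtain ⟨B, hB⟩ := Matrix.mulVec_surjective_iff_exists_right_inverse.1 hA
  have hfB : A.map f * B.map f = 1 := by
    rw [← Matrix.map_mul, hB, Matrix.map_one _ f.map_zero f.map_one]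
  rw [← Matrix.vecMul_injective_iff]
  intro x y hxy
  simpa [Matrix.vecMul_vecMul, hfB] using congrArg (Matrix.vecMul · (B.map f)) hxy

theorem stmt_12_general (d n : ℕ) (A : Matrix (Fin d) (Fin n) ℤ)
    (hA : Function.Surjective A.mulVec) :
    RingTheory.Sequence.IsRegular (MvPolynomial (Fin n ⊕ Fin n) ℂ)
      (List.ofFn fun j : Fin d =>
        ∑ i : Fin n, C (A j i : ℂ) * X (Sum.inl i) * X (Sum.inr i)) :=
  isRegular_ofFn_circ (A.linearIndependent_row_map_of_mulVec_surjective (Int.castRingHom ℂ) hA)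

/-- If `A` has rank `d` (here: is surjective), no zero column, and all rows of its Gale
dual `B` are nonzero, then the generators `∑ᵢ a_{ji} zᵢ wᵢ` (`j = 1,…,d`) of `Circ(ℬ)`
form a regular sequence in `ℂ[z,w]`; i.e. `Circ(ℬ)` is a complete intersection of
codimension `d`. -/
theorem stmt_12 (d n e : ℕ) (A : Matrix (Fin d) (Fin n) ℤ)
    (B : Matrix (Fin n) (Fin e) ℤ)
    (hA : Function.Surjective A.mulVec)
    (hcomp : ∀ c : Fin e → ℤ, A.mulVec (B.mulVec c) = 0)
    (hker : ∀ v : Fin n → ℤ, A.mulVec v = 0 → ∃! c : Fin e → ℤ, B.mulVec c = v)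
    (hcol : ∀ i : Fin n, (fun j => A j i) ≠ 0)
    (hrows : ∀ i : Fin n, (fun k => B i k) ≠ 0) :
    RingTheory.Sequence.IsRegular (MvPolynomial (Fin n ⊕ Fin n) ℂ)
      (List.ofFn fun j : Fin d =>
        ∑ i : Fin n, C (A j i : ℂ) * X (Sum.inl i) * X (Sum.inr i)) :=
  stmt_12_general d n A hA
end

section
/- Let C_n be the cyclic quiver with vertices 0,1,…,n−1 and edges (i, i+1 mod n), let T = C[z_0,…,z_{n−1}, w_0,…,w_{n−1}], and let T_0 be the subring of invariants under the torus action z_i ↦ t_i t_{i+1}^{-1} z_i, w_i ↦ t_i^{-1} t_{i+1} w_i (indices mod n, with t_0 = 1). Then T_0 = C[z_0 w_0, z_1 w_1, …, z_{n−1} w_{n−1}, z_0 z_1⋯z_{n−1}, w_0 w_1⋯w_{n−1}], and the quotient of T_0 by the ideal T_0 ∩ ⟨z_i w_i − z_{i+1} w_{i+1} : i mod n⟩ is isomorphic to C[zw, z^n, w^n] ⊂ C[z,w], the invariant ring of the cyclic group Γ_n of order n acting on C^2 by (z,w) ↦ (ηz, η^{-1}w). -/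
/-
The torus rescales the monomial `∏ z_i^{a_i} w_i^{b_i}` by `∏ t_i^{g_i - g_{i-1}}`,
where `g_i = a_i - b_i`. Testing with `t` equal to `2` at a single vertex `j ≠ 0` shows that a
monomial is invariant iff `g` is constant, i.e. iff it is a product of the `z_i w_i` times a power
of `z_0⋯z_{n-1}` or of `w_0⋯w_{n-1}`; this gives the invariant ring.

The substitution `z_i ↦ z, w_i ↦ w` maps `T_0` onto `ℂ[zw, zⁿ, wⁿ]` and kills the ideal. Modulo the
ideal every `z_i w_i` equals `u = z_0 w_0` and `(∏ z_i)(∏ w_i) = uⁿ`, so the image of `T_0` is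
spanned by the words `uᵃ (∏ z_i)ᵏ` and `uᵃ (∏ w_i)ᵏ`. These go to the distinct monomials
`z^{a+nk} wᵃ` and `zᵃ w^{a+nk}`, hence are independent, and the kernel on `T_0` is exactly
`T_0` intersected with the ideal.
-/

open MvPolynomial

theorem Fin.apply_eq_apply_zero_of_apply_eq_apply_sub_one {n : ℕ} [NeZero n] {α : Type*}
    {g : Fin n → α} (h : ∀ j, j ≠ 0 → g j = g (j - 1)) (i : Fin n) : g i = g 0 := by
  obtain ⟨m, rfl⟩ := Nat.exists_eq_succ_of_ne_zero (NeZero.ne n)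
  induction i using Fin.induction with
  | zero => rfl
  | succ i ih => rw [h _ (Fin.succ_ne_zero i), ← Fin.coeSucc_eq_succ, add_sub_cancel_right, ih]

theorem Fin.prod_univ_comp_add_one {n : ℕ} [NeZero n] {M : Type*} [CommMonoid M]
    (f : Fin n → M) : ∏ i, f (i + 1) = ∏ i, f i :=
  Fintype.prod_equiv (Equiv.addRight 1) _ _ fun _ => rfl

theorem two_zpow_eq_one_iff {K : Type*} [Field K] [CharZero K] {k : ℤ} :
    (2 : K) ^ k = 1 ↔ k = 0 := by
  rw [← zpow_eq_one_iff_right₀ (zero_le_two : (0 : ℚ) ≤ 2) (by norm_num),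
    ← (Rat.cast_injective (α := K)).eq_iff]
  push_cast
  rfl

namespace MvPolynomial
variable {σ R : Type*} [CommSemiring R]

theorem aeval_smul_X_monomial (c : σ → R) (e : σ →₀ ℕ) (a : R) :
    aeval (fun x => c x • X x) (monomial e a) = monomial e ((e.prod fun x k => c x ^ k) * a) := by
  rw [aeval_monomial]
  simp only [Finsupp.prod, smul_pow, Finset.prod_smul]
  rw [monomial_eq, Finsupp.prod, smul_eq_C_mul, algebraMap_eq, C_mul]
  ring

theorem coeff_aeval_smul_X (c : σ → R) (p : MvPolynomial σ R) (d : σ →₀ ℕ) :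
    coeff d (aeval (fun x => c x • X x) p) = (d.prod fun x k => c x ^ k) * coeff d p := by
  classical
  induction p using MvPolynomial.induction_on' with
  | monomial e a =>
    rw [aeval_smul_X_monomial, coeff_monomial, coeff_monomial]
    split_ifs with h
    · rw [h]
    · rw [mul_zero]
  | add p q hp hq => simp only [map_add, coeff_add, hp, hq, mul_add]

theorem prod_pow_eq_one_of_aeval_smul_X_eq [IsRightCancelMulZero R] {c : σ → R}
    {p : MvPolynomial σ R} (hp : aeval (fun x => c x • X x) p = p) {d : σ →₀ ℕ}
    (hd : d ∈ p.support) : (d.prod fun x k => c x ^ k) = 1 := by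
  have h := congrArg (coeff d) hp
  rw [coeff_aeval_smul_X] at h
  exact mul_right_cancel₀ (mem_support_iff.mp hd) (h.trans (one_mul _).symm)

end MvPolynomial

theorem LinearIndependent.eq_zero_of_mem_span_of_map_eq_zero {ι R M N : Type*} [Semiring R]
    [AddCommMonoid M] [Module R M] [AddCommMonoid N] [Module R N] {f : M →ₗ[R] N} {v : ι → M}
    (hv : LinearIndependent R (f ∘ v)) {x : M} (hx : x ∈ Submodule.span R (Set.range v))
    (hfx : f x = 0) : x = 0 := by
  rw [← Finsupp.range_linearCombination] at hx
  obtain ⟨c, rfl⟩ := hx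
  rw [Finsupp.apply_linearCombination, ← map_zero (Finsupp.linearCombination R (f ∘ v))] at hfx
  rw [hv hfx, map_zero]

namespace CyclicQuiver

def imbalance {n : ℕ} (d : Fin n ⊕ Fin n →₀ ℕ) (i : Fin n) : ℤ := d (Sum.inl i) - d (Sum.inr i)

section Weights
variable {n : ℕ} [NeZero n] {G : Type*} [CommGroup G]

def edgeWeight (t : Fin n → G) : Fin n ⊕ Fin n → G :=
  Sum.elim (fun i => t i * (t (i + 1))⁻¹) (fun i => (t i)⁻¹ * t (i + 1))

theorem edgeWeight_inl_mul_edgeWeight_inr (t : Fin n → G) (i : Fin n) :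
    edgeWeight t (Sum.inl i) * edgeWeight t (Sum.inr i) = 1 := by
  simp only [edgeWeight, Sum.elim_inl, Sum.elim_inr]
  rw [mul_mul_mul_comm, mul_inv_cancel, inv_mul_cancel, one_mul]

theorem prod_edgeWeight_inl (t : Fin n → G) : ∏ i, edgeWeight t (Sum.inl i) = 1 := by
  simp [edgeWeight, Finset.prod_mul_distrib, Fin.prod_univ_comp_add_one t]

theorem prod_edgeWeight_inr (t : Fin n → G) : ∏ i, edgeWeight t (Sum.inr i) = 1 := by
  simp [edgeWeight, Finset.prod_mul_distrib, Fin.prod_univ_comp_add_one t]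

theorem prod_edgeWeight_pow (t : Fin n → G) (d : Fin n ⊕ Fin n →₀ ℕ) :
    ∏ x, edgeWeight t x ^ d x = ∏ i, t i ^ (imbalance d i - imbalance d (i - 1)) := by
  have hshift : ∏ i, t (i + 1) ^ imbalance d i = ∏ i, t i ^ imbalance d (i - 1) := by
    simpa only [add_sub_cancel_right] using
      Fin.prod_univ_comp_add_one fun i => t i ^ imbalance d (i - 1)
  have hpair : ∀ i, edgeWeight t (Sum.inl i) ^ d (Sum.inl i) *
      edgeWeight t (Sum.inr i) ^ d (Sum.inr i) =
        t i ^ imbalance d i * (t (i + 1) ^ imbalance d i)⁻¹ := by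
    intro i
    have hinv : edgeWeight t (Sum.inr i) = (edgeWeight t (Sum.inl i))⁻¹ :=
      eq_inv_of_mul_eq_one_right (edgeWeight_inl_mul_edgeWeight_inr t i)
    rw [hinv, inv_pow, ← zpow_natCast, ← zpow_natCast, ← zpow_neg, ← zpow_add, ← sub_eq_add_neg]
    simp only [edgeWeight, Sum.elim_inl, mul_zpow, inv_zpow', imbalance, zpow_neg]
  simp only [Fintype.prod_sum_type, ← Finset.prod_mul_distrib, hpair, zpow_sub]
  rw [Finset.prod_mul_distrib, Finset.prod_mul_distrib, Finset.prod_inv_distrib,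
    Finset.prod_inv_distrib, hshift]

end Weights

def generators (R : Type*) [CommSemiring R] (n : ℕ) : Set (MvPolynomial (Fin n ⊕ Fin n) R) :=
  {p | ∃ i : Fin n, p = X (Sum.inl i) * X (Sum.inr i)} ∪
    {∏ i : Fin n, X (Sum.inl i), ∏ i : Fin n, X (Sum.inr i)}

section Invariants
variable {n : ℕ} [NeZero n] {R : Type*} [CommRing R]

noncomputable def torusAct (t : Fin n → Rˣ) :
    MvPolynomial (Fin n ⊕ Fin n) R →ₐ[R] MvPolynomial (Fin n ⊕ Fin n) R :=
  aeval fun x => ((edgeWeight t x : Rˣ) : R) • X x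

theorem torusAct_eq_aeval {K : Type*} [Field K] (t : Fin n → Kˣ) :
    torusAct t = aeval (Sum.elim
      (fun i : Fin n => ((t i : K) * ((t (i + 1) : K))⁻¹) • (X (Sum.inl i) : MvPolynomial _ K))
      (fun i : Fin n => (((t i : K))⁻¹ * (t (i + 1) : K)) • X (Sum.inr i))) := by
  rw [torusAct]
  congr 1
  funext x
  cases x <;> simp [edgeWeight]

theorem adjoin_generators_le_equalizer_torusAct (t : Fin n → Rˣ) :
    Algebra.adjoin R (generators R n) ≤ (torusAct t).equalizer (AlgHom.id R _) := by
  rw [Algebra.adjoin_le_iff]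
  rintro _ (⟨i, rfl⟩ | rfl | rfl) <;>
    simp only [SetLike.mem_coe, AlgHom.mem_equalizer, AlgHom.id_apply, torusAct, map_mul,
      map_prod, aeval_X]
  · rw [smul_mul_smul_comm, ← Units.val_mul, edgeWeight_inl_mul_edgeWeight_inr, Units.val_one,
      one_smul]
  · rw [Finset.prod_smul, ← Units.coe_prod, prod_edgeWeight_inl, Units.val_one, one_smul]
  · rw [Finset.prod_smul, ← Units.coe_prod, prod_edgeWeight_inr, Units.val_one, one_smul]

theorem monomial_mem_adjoin_generators {d : Fin n ⊕ Fin n →₀ ℕ}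
    (hd : ∀ i, imbalance d i = imbalance d 0) (a : R) :
    monomial d a ∈ Algebra.adjoin R (generators R n) := by
  set k := imbalance d 0
  have hsplit : monomial d a = C a *
      (∏ i : Fin n, (X (Sum.inl i) * X (Sum.inr i)) ^ min (d (Sum.inl i)) (d (Sum.inr i))) *
      (∏ i : Fin n, X (Sum.inl i)) ^ k.toNat * (∏ i : Fin n, X (Sum.inr i)) ^ (-k).toNat := by
    rw [monomial_eq, Finsupp.prod_fintype _ _ fun _ => pow_zero _, Fintype.prod_sum_type,
      ← Finset.prod_pow, ← Finset.prod_pow, mul_assoc, mul_assoc, ← Finset.prod_mul_distrib,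
      ← Finset.prod_mul_distrib, ← Finset.prod_mul_distrib]
    congr 1
    refine Finset.prod_congr rfl fun i _ => ?_
    have hi : (d (Sum.inl i) : ℤ) - d (Sum.inr i) = k := hd i
    obtain ⟨m, hl, hr⟩ : ∃ m, d (Sum.inl i) = m + k.toNat ∧ d (Sum.inr i) = m + (-k).toNat :=
      ⟨min (d (Sum.inl i)) (d (Sum.inr i)), by omega, by omega⟩
    rw [hl, hr, show min (m + k.toNat) (m + (-k).toNat) = m by omega]
    ring
  have hmem : generators R n ⊆ Algebra.adjoin R (generators R n) := Algebra.subset_adjoin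
  rw [hsplit]
  refine Subalgebra.mul_mem _ (Subalgebra.mul_mem _ (Subalgebra.mul_mem _
    (Subalgebra.algebraMap_mem _ a) ?_) ?_) ?_
  · exact Subalgebra.prod_mem _ fun i _ => Subalgebra.pow_mem _ (hmem (Or.inl ⟨i, rfl⟩)) _
  · exact Subalgebra.pow_mem _ (hmem (Or.inr (Set.mem_insert _ _))) _
  · exact Subalgebra.pow_mem _ (hmem (Or.inr (Set.mem_insert_of_mem _ rfl))) _

variable {K : Type*} [Field K] [CharZero K]

theorem imbalance_eq_of_mem_support {p : MvPolynomial (Fin n ⊕ Fin n) K}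
    (hp : ∀ t : Fin n → Kˣ, t 0 = 1 → torusAct t p = p) {d : Fin n ⊕ Fin n →₀ ℕ}
    (hd : d ∈ p.support) (i : Fin n) : imbalance d i = imbalance d 0 := by
  refine Fin.apply_eq_apply_zero_of_apply_eq_apply_sub_one (fun j hj => ?_) i
  -- the torus element equal to 2 at the vertex `j` and 1 elsewhere rescales `X^d` by
  -- `2 ^ (imbalance d j - imbalance d (j - 1))`
  have hweight := prod_pow_eq_one_of_aeval_smul_X_eq
    (hp (Pi.mulSingle j (Units.mk0 2 two_ne_zero)) (Pi.mulSingle_eq_of_ne' hj _)) hd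
  rw [Finsupp.prod_fintype _ _ fun _ => pow_zero _] at hweight
  simp only [← Units.val_pow_eq_pow_val, ← Units.coe_prod, prod_edgeWeight_pow] at hweight
  rw [Fintype.prod_eq_single j fun i hi => by simp [Pi.mulSingle_eq_of_ne hi]] at hweight
  simpa [two_zpow_eq_one_iff, sub_eq_zero] using hweight

theorem mem_adjoin_generators_iff {p : MvPolynomial (Fin n ⊕ Fin n) K} :
    p ∈ Algebra.adjoin K (generators K n) ↔ ∀ t : Fin n → Kˣ, t 0 = 1 → torusAct t p = p := by
  refine ⟨fun hp t _ => adjoin_generators_le_equalizer_torusAct t hp, fun hp => ?_⟩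
  rw [← support_sum_monomial_coeff p]
  exact Subalgebra.sum_mem _ fun d hd => monomial_mem_adjoin_generators
    (imbalance_eq_of_mem_support hp hd) _

end Invariants

section NormalWord
variable {M : Type*} [CommMonoid M]

def normalWord (U V W : M) (p : ℕ × ℤ) : M := U ^ p.1 * V ^ p.2.toNat * W ^ (-p.2).toNat

theorem normalWord_mul {U V W : M} {m : ℕ} (h : V * W = U ^ m) (p q : ℕ × ℤ) :
    normalWord U V W p * normalWord U V W q = normalWord U V W
      (p.1 + q.1 + m * min (p.2.toNat + q.2.toNat) ((-p.2).toNat + (-q.2).toNat), p.2 + q.2) := by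
  obtain ⟨a, k⟩ := p
  obtain ⟨b, l⟩ := q
  set e := min (k.toNat + l.toNat) ((-k).toNat + (-l).toNat)
  have hV : k.toNat + l.toNat = e + (k + l).toNat := by omega
  have hW : (-k).toNat + (-l).toNat = e + (-(k + l)).toNat := by omega
  calc normalWord U V W (a, k) * normalWord U V W (b, l)
      = U ^ (a + b) * V ^ (k.toNat + l.toNat) * W ^ ((-k).toNat + (-l).toNat) := by
        simp only [normalWord, pow_add]; ac_rfl
    _ = U ^ (a + b) * (V * W) ^ e * V ^ (k + l).toNat * W ^ (-(k + l)).toNat := by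
        simp only [hV, hW, pow_add, mul_pow]; ac_rfl
    _ = _ := by simp only [h, ← pow_mul, normalWord, pow_add]

def normalWordSubmonoid {U V W : M} {m : ℕ} (h : V * W = U ^ m) : Submonoid M where
  carrier := Set.range (normalWord U V W)
  one_mem' := ⟨(0, 0), by simp [normalWord]⟩
  mul_mem' := by
    rintro _ _ ⟨p, rfl⟩ ⟨q, rfl⟩
    exact ⟨_, (normalWord_mul h p q).symm⟩

theorem map_normalWord {N F : Type*} [CommMonoid N] [FunLike F M N] [MonoidHomClass F M N]
    (f : F) (U V W : M) (p : ℕ × ℤ) :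
    f (normalWord U V W p) = normalWord (f U) (f V) (f W) p := by
  simp only [normalWord, map_mul, map_pow]

end NormalWord

noncomputable def collapse (R : Type*) [CommRing R] (n : ℕ) :
    MvPolynomial (Fin n ⊕ Fin n) R →ₐ[R] MvPolynomial (Fin 2) R :=
  aeval (Sum.elim (fun _ => X 0) (fun _ => X 1))

section Quotient
variable (R : Type*) [CommRing R] (n : ℕ) [NeZero n]

noncomputable def diagonalIdeal : Ideal (MvPolynomial (Fin n ⊕ Fin n) R) :=
  Ideal.span (Set.range fun i : Fin n =>
    X (Sum.inl i) * X (Sum.inr i) - X (Sum.inl (i + 1)) * X (Sum.inr (i + 1)))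

variable {R n}

theorem linearIndependent_normalWord_monomials :
    LinearIndependent R (normalWord (X 0 * X 1 : MvPolynomial (Fin 2) R) (X 0 ^ n) (X 1 ^ n)) := by
  let e : ℕ × ℤ → Fin 2 →₀ ℕ := fun p =>
    Finsupp.single 0 (p.1 + n * p.2.toNat) + Finsupp.single 1 (p.1 + n * (-p.2).toNat)
  have he : Function.Injective e := by
    rintro ⟨a, k⟩ ⟨b, l⟩ h
    have h0 : a + n * k.toNat = b + n * l.toNat := by simpa [e] using congrArg (· 0) h
    have h1 : a + n * (-k).toNat = b + n * (-l).toNat := by simpa [e] using congrArg (· 1) h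
    have hk : k = l := by
      refine mul_left_cancel₀ (Nat.cast_ne_zero.mpr (NeZero.ne n) : (n : ℤ) ≠ 0) ?_
      rw [← Int.toNat_sub_toNat_neg k, ← Int.toNat_sub_toNat_neg l]
      zify at h0 h1
      linear_combination h0 - h1
    subst hk
    rw [Nat.add_right_cancel h0]
  have hmon : normalWord (X 0 * X 1 : MvPolynomial (Fin 2) R) (X 0 ^ n) (X 1 ^ n) =
      fun p => monomial (e p) 1 := by
    funext ⟨a, k⟩
    rw [← one_mul (1 : R), ← monomial_mul, ← X_pow_eq_monomial, ← X_pow_eq_monomial, normalWord]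
    ring
  rw [hmon]
  exact (basisMonomials (Fin 2) R).linearIndependent.comp e he

theorem diagonalIdeal_le_ker_collapse : diagonalIdeal R n ≤ RingHom.ker (collapse R n) := by
  rw [diagonalIdeal, Ideal.span_le]
  rintro _ ⟨i, rfl⟩
  simp [collapse]

theorem mk_X_inl_mul_X_inr (i : Fin n) :
    Ideal.Quotient.mk (diagonalIdeal R n) (X (Sum.inl i) * X (Sum.inr i)) =
      Ideal.Quotient.mk (diagonalIdeal R n) (X (Sum.inl 0) * X (Sum.inr 0)) := by
  refine Fin.apply_eq_apply_zero_of_apply_eq_apply_sub_one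
    (g := fun i => Ideal.Quotient.mk (diagonalIdeal R n) (X (Sum.inl i) * X (Sum.inr i)))
    (fun j _ => ?_) i
  refine (Ideal.Quotient.eq.mpr ?_).symm
  have hmem : _ ∈ diagonalIdeal R n := Ideal.subset_span ⟨j - 1, rfl⟩
  simpa only [sub_add_cancel] using hmem

theorem mk_prod_X_inl_mul_mk_prod_X_inr :
    Ideal.Quotient.mk (diagonalIdeal R n) (∏ i, X (Sum.inl i)) *
        Ideal.Quotient.mk (diagonalIdeal R n) (∏ i, X (Sum.inr i)) =
      Ideal.Quotient.mk (diagonalIdeal R n) (X (Sum.inl 0) * X (Sum.inr 0)) ^ n := by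
  simp only [← map_mul, ← Finset.prod_mul_distrib, map_prod, mk_X_inl_mul_X_inr,
    Finset.prod_const, Finset.card_univ, Fintype.card_fin]

theorem mk_mem_span_normalWord {p : MvPolynomial (Fin n ⊕ Fin n) R}
    (hp : p ∈ Algebra.adjoin R (generators R n)) :
    Ideal.Quotient.mk (diagonalIdeal R n) p ∈ Submodule.span R (Set.range (normalWord
      (Ideal.Quotient.mk (diagonalIdeal R n) (X (Sum.inl 0) * X (Sum.inr 0)))
      (Ideal.Quotient.mk (diagonalIdeal R n) (∏ i, X (Sum.inl i)))
      (Ideal.Quotient.mk (diagonalIdeal R n) (∏ i, X (Sum.inr i))))) := by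
  let S := normalWordSubmonoid (mk_prod_X_inl_mul_mk_prod_X_inr (R := R) (n := n))
  have hgen : Ideal.Quotient.mkₐ R (diagonalIdeal R n) '' generators R n ⊆ S := by
    rintro _ ⟨g, ⟨i, rfl⟩ | rfl | rfl, rfl⟩
    · exact ⟨(1, 0), by simp [normalWord, mk_X_inl_mul_X_inr]⟩
    · exact ⟨(0, 1), by simp [normalWord]⟩
    · exact ⟨(0, -1), by simp [normalWord]⟩
  have hmem : Ideal.Quotient.mkₐ R (diagonalIdeal R n) p ∈ Algebra.adjoin R (S : Set _) := by
    refine Algebra.adjoin_mono hgen ?_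
    rw [← AlgHom.map_adjoin]
    exact Subalgebra.mem_map.mpr ⟨p, hp, rfl⟩
  rwa [← Subalgebra.mem_toSubmodule, Algebra.adjoin_eq_span, Submonoid.closure_eq] at hmem

theorem mem_diagonalIdeal_of_collapse_eq_zero {p : MvPolynomial (Fin n ⊕ Fin n) R}
    (hp : p ∈ Algebra.adjoin R (generators R n)) (hp0 : collapse R n p = 0) :
    p ∈ diagonalIdeal R n := by
  let φ := Ideal.Quotient.liftₐ (diagonalIdeal R n) (collapse R n)
    fun _ ha => diagonalIdeal_le_ker_collapse ha
  have hφ : ∀ q, φ (Ideal.Quotient.mk _ q) = collapse R n q := fun _ => rfl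
  have hli : LinearIndependent R (φ.toLinearMap ∘ normalWord
      (Ideal.Quotient.mk (diagonalIdeal R n) (X (Sum.inl 0) * X (Sum.inr 0)))
      (Ideal.Quotient.mk (diagonalIdeal R n) (∏ i, X (Sum.inl i)))
      (Ideal.Quotient.mk (diagonalIdeal R n) (∏ i, X (Sum.inr i)))) := by
    convert linearIndependent_normalWord_monomials (R := R) (n := n) using 1
    funext q
    simp [map_normalWord, hφ, collapse]
  rw [← Ideal.Quotient.eq_zero_iff_mem]
  exact hli.eq_zero_of_mem_span_of_map_eq_zero (mk_mem_span_normalWord hp) hp0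

theorem image_collapse_generators :
    collapse R n '' generators R n = {X 0 * X 1, X 0 ^ n, X 1 ^ n} := by
  have hdiag : collapse R n '' {p | ∃ i : Fin n, p = X (Sum.inl i) * X (Sum.inr i)} =
      {X 0 * X 1} := by
    ext y
    simp [collapse, eq_comm]
  rw [generators, Set.image_union, hdiag, Set.image_pair, Set.singleton_union]
  simp [collapse]

theorem map_collapse_adjoin_generators :
    (Algebra.adjoin R (generators R n)).map (collapse R n) =
      Algebra.adjoin R ({X 0 * X 1, X 0 ^ n, X 1 ^ n} : Set (MvPolynomial (Fin 2) R)) := by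
  rw [AlgHom.map_adjoin, image_collapse_generators]

noncomputable def quotientEquiv :
    (Algebra.adjoin R (generators R n) ⧸
        (diagonalIdeal R n).comap (Algebra.adjoin R (generators R n)).val) ≃ₐ[R]
      Algebra.adjoin R ({X 0 * X 1, X 0 ^ n, X 1 ^ n} : Set (MvPolynomial (Fin 2) R)) :=
  let f := (collapse R n).comp (Algebra.adjoin R (generators R n)).val
  have hker : (diagonalIdeal R n).comap (Algebra.adjoin R (generators R n)).val =
      RingHom.ker f := by
    ext ⟨p, hp⟩
    exact ⟨fun h => diagonalIdeal_le_ker_collapse h,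
      fun h => mem_diagonalIdeal_of_collapse_eq_zero hp h⟩
  have hrange : f.range =
      Algebra.adjoin R ({X 0 * X 1, X 0 ^ n, X 1 ^ n} : Set (MvPolynomial (Fin 2) R)) := by
    rw [AlgHom.range_comp, Subalgebra.range_val, map_collapse_adjoin_generators]
  (Ideal.quotientEquivAlgOfEq R hker).trans
    ((Ideal.quotientKerEquivRange f).trans (Subalgebra.equivOfEq _ _ hrange))

end Quotient
end CyclicQuiver

/-- For the cyclic quiver `C_n`: the invariant ring `T₀` of the symplectic torus action
(with `t₀ = 1`) on `T = ℂ[z₀,…,z_{n-1},w₀,…,w_{n-1}]` is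
`ℂ[z₀w₀, …, z_{n-1}w_{n-1}, z₀⋯z_{n-1}, w₀⋯w_{n-1}]`, and its quotient by
`T₀ ∩ ⟨zᵢwᵢ - z_{i+1}w_{i+1}⟩` is isomorphic to `ℂ[zw, zⁿ, wⁿ] ⊆ ℂ[z,w]`, the invariant
ring of the cyclic group `Γ_n` acting by `(z,w) ↦ (ηz, η⁻¹w)`. -/
theorem stmt_14 (n : ℕ) [NeZero n]
    (act : (Fin n → ℂˣ) →
      (MvPolynomial (Fin n ⊕ Fin n) ℂ →ₐ[ℂ] MvPolynomial (Fin n ⊕ Fin n) ℂ))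
    (hact : ∀ t : Fin n → ℂˣ, act t = MvPolynomial.aeval (Sum.elim
      (fun i : Fin n => ((t i : ℂ) * ((t (i + 1) : ℂ))⁻¹) •
        (X (Sum.inl i) : MvPolynomial (Fin n ⊕ Fin n) ℂ))
      (fun i : Fin n => (((t i : ℂ))⁻¹ * (t (i + 1) : ℂ)) • X (Sum.inr i))))
    (T0 : Subalgebra ℂ (MvPolynomial (Fin n ⊕ Fin n) ℂ))
    (hT0 : T0 = Algebra.adjoin ℂ
      ({p | ∃ i : Fin n, p = X (Sum.inl i) * X (Sum.inr i)} ∪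
       {∏ i : Fin n, X (Sum.inl i), ∏ i : Fin n, X (Sum.inr i)})) :
    ((T0 : Set (MvPolynomial (Fin n ⊕ Fin n) ℂ)) =
        {p | ∀ t : Fin n → ℂˣ, t 0 = 1 → act t p = p}) ∧
    Nonempty ((T0 ⧸ Ideal.comap T0.val (Ideal.span (Set.range fun i : Fin n =>
        (X (Sum.inl i) * X (Sum.inr i) -
          X (Sum.inl (i + 1)) * X (Sum.inr (i + 1)) :
            MvPolynomial (Fin n ⊕ Fin n) ℂ)))) ≃ₐ[ℂ]
      (Algebra.adjoin ℂ
        ({X 0 * X 1, (X 0) ^ n, (X 1) ^ n} : Set (MvPolynomial (Fin 2) ℂ)))) := by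
  subst hT0
  have hact' : ∀ t, act t = CyclicQuiver.torusAct t :=
    fun t => (hact t).trans (CyclicQuiver.torusAct_eq_aeval t).symm
  refine ⟨?_, ⟨CyclicQuiver.quotientEquiv⟩⟩
  ext p
  simp only [SetLike.mem_coe, hact']
  exact CyclicQuiver.mem_adjoin_generators_iff
end

section
/- Let B^T = (1 1 ⋯ 1) be the 1×n all-ones matrix, so the Gale dual A is the (n−1)×n matrix with rows e_i − e_{i+1}. Then θ = (θ_1,…,θ_{n−1}) ∈ Z^{n−1} is generic for the configuration {±a_1,…,±a_n} (i.e., θ does not lie on any hyperplane spanned by a subset of the columns of A) if and only if every consecutive coordinate sum θ_i + θ_{i+1} + ⋯ + θ_j (1 ≤ i ≤ j ≤ n−1) is nonzero. -/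
private lemma fin_sum_Icc {d : ℕ} (i j : Fin d) (f : Fin d → ℚ) :
    ∑ k ∈ Finset.Icc i j, f k
      = ∑ k ∈ Finset.Icc (i:ℕ) (j:ℕ), if h : k < d then f ⟨k, h⟩ else 0 := by
  rw [← Fin.map_valEmbedding_Icc, Finset.sum_map]
  refine Finset.sum_congr rfl fun k _ => ?_
  simp [Fin.valEmbedding]

private lemma telescope (a b : ℕ) (hab : a ≤ b) (F : ℕ → ℚ) :
    ∑ k ∈ Finset.Ico a b, (F k - F (k+1)) = F a - F b := by
  rw [Finset.sum_Ico_eq_sub _ hab]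
  have h : ∀ n, ∑ k ∈ Finset.range n, (F k - F (k+1)) = F 0 - F n := by
    intro n; induction n with
    | zero => simp
    | succ n ih => rw [Finset.sum_range_succ, ih]; ring
  rw [h, h]; ring

/-- For the boundary matrix `A` of the `n`-cycle (rows `eᵢ - eᵢ₊₁`, Gale dual
`Bᵀ = (1 ⋯ 1)`), a vector `θ` is generic for `{±a₁,…,±aₙ}` (not on any hyperplane
spanned by `d - 1 = n - 2` columns of `A`) iff every consecutive coordinate sum
`θᵢ + ⋯ + θⱼ` is nonzero. -/
theorem stmt_15 (d : ℕ) (hd : 0 < d) (A : Matrix (Fin d) (Fin (d + 1)) ℤ)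
    (hA : ∀ (i : Fin d) (j : Fin (d + 1)),
      A i j = (if j = i.castSucc then 1 else 0) - (if j = i.succ then 1 else 0))
    (θ : Fin d → ℤ) :
    (∀ s : Finset (Fin (d + 1)), s.card = d - 1 →
        (fun i => (θ i : ℚ)) ∉ Submodule.span ℚ
          ((fun j : Fin (d + 1) => fun i => (A i j : ℚ)) '' ↑s)) ↔
      ∀ i j : Fin d, i ≤ j → (∑ k ∈ Finset.Icc i j, θ k) ≠ 0 := by
  constructor
  · -- span condition → sums nonzero
    intro H i j hij hzero
    have hijn : (i:ℕ) ≤ (j:ℕ) := hij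
    set P : Fin (d+1) := i.castSucc with hP
    set Q : Fin (d+1) := j.succ with hQ
    have hPQ : P ≠ Q := by
      simp only [hP, hQ, Ne, Fin.ext_iff, Fin.coe_castSucc, Fin.val_succ]
      omega
    set s : Finset (Fin (d+1)) := {P, Q}ᶜ with hs
    have hcard : s.card = d - 1 := by
      rw [hs, Finset.card_compl, Finset.card_pair hPQ, Fintype.card_fin]
      omega
    refine H s hcard ?_
    -- build the representation
    set g : ℕ → ℚ := fun k => if h : k < d then (θ ⟨k, h⟩ : ℚ) else 0 with hg
    set S : ℕ → ℚ := fun m => ∑ k ∈ Finset.range m, g k with hS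
    set c : Fin (d+1) → ℚ := fun m => S ((j:ℕ)+1) - S (m:ℕ) with hc
    have hcP : c P = 0 := by
      have h1 : c P = ∑ k ∈ Finset.Ico (i:ℕ) ((j:ℕ)+1), g k := by
        rw [Finset.sum_Ico_eq_sub _ (by omega)]; rfl
      have h2 : ∑ k ∈ Finset.Ico (i:ℕ) ((j:ℕ)+1), g k
          = ∑ k ∈ Finset.Icc i j, ((θ k : ℚ)) := by
        rw [fin_sum_Icc i j (fun k => (θ k : ℚ)), Finset.Ico_add_one_right_eq_Icc]
      have h3 : ∑ k ∈ Finset.Icc i j, ((θ k : ℚ)) = ((∑ k ∈ Finset.Icc i j, θ k : ℤ) : ℚ) := by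
        push_cast; ring
      rw [h1, h2, h3, hzero]; simp
    have hcQ : c Q = 0 := by simp [hc, hQ]
    have key : (fun i' => ((θ i' : ℚ))) = ∑ m ∈ s, c m • (fun i' => (A i' m : ℚ)) := by
      have hext : ∑ m ∈ s, c m • (fun i' => (A i' m : ℚ))
          = ∑ m ∈ Finset.univ, c m • (fun i' => (A i' m : ℚ)) := by
        refine Finset.sum_subset (Finset.subset_univ _) ?_
        intro m _ hm
        rw [hs, Finset.mem_compl, not_not, Finset.mem_insert, Finset.mem_singleton] at hm
        rcases hm with h | h
        · rw [h, hcP, zero_smul]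
        · rw [h, hcQ, zero_smul]
      rw [hext]
      funext i'
      have : (∑ m ∈ Finset.univ, c m • (fun i'' => (A i'' m : ℚ))) i'
          = ∑ m ∈ Finset.univ, c m * (A i' m : ℚ) := by
        simp [Finset.sum_apply]
      rw [this]
      have hterm : ∀ m : Fin (d+1), c m * (A i' m : ℚ)
          = (if m = i'.castSucc then c m else 0) - (if m = i'.succ then c m else 0) := by
        intro m
        rw [hA]
        push_cast
        rw [mul_sub, mul_ite, mul_ite, mul_one, mul_zero]
      rw [Finset.sum_congr rfl (fun m _ => hterm m), Finset.sum_sub_distrib,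
        Finset.sum_ite_eq', Finset.sum_ite_eq']
      simp only [Finset.mem_univ, if_true]
      have hv1 : ((i'.castSucc : Fin (d+1)) : ℕ) = (i' : ℕ) := rfl
      have hv2 : ((i'.succ : Fin (d+1)) : ℕ) = (i' : ℕ) + 1 := rfl
      rw [hc]
      simp only [hv1, hv2]
      have : S ((i':ℕ)+1) = S (i':ℕ) + g (i':ℕ) := Finset.sum_range_succ g _
      rw [show (S ((j:ℕ)+1) - S (i':ℕ)) - (S ((j:ℕ)+1) - S ((i':ℕ)+1))
          = S ((i':ℕ)+1) - S (i':ℕ) by ring, this]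
      simp [hg, i'.isLt]
    rw [key]
    exact Submodule.sum_mem _ fun m hm =>
      Submodule.smul_mem _ _ (Submodule.subset_span ⟨m, hm, rfl⟩)
  · -- sums nonzero → span condition
    intro H s hcard hmem
    have hcardc : sᶜ.card = 2 := by
      rw [Finset.card_compl, hcard, Fintype.card_fin]; omega
    obtain ⟨P, Q, hPQne, hst⟩ := Finset.card_eq_two.1 hcardc
    obtain ⟨p, q, hpq, hsc⟩ : ∃ p q : Fin (d+1), p < q ∧ sᶜ = {p, q} := by
      rcases lt_or_gt_of_ne hPQne with h | h
      · exact ⟨P, Q, h, hst⟩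
      · exact ⟨Q, P, h, by rw [hst, Finset.pair_comm]⟩
    have hpqn : (p:ℕ) < (q:ℕ) := hpq
    have hqd : (q:ℕ) ≤ d := by omega
    set i : Fin d := ⟨(p:ℕ), by omega⟩ with hi
    set jj : Fin d := ⟨(q:ℕ)-1, by omega⟩ with hjj
    have hij : i ≤ jj := by
      simp only [Fin.le_def, hi, hjj]; omega
    have hne := H i jj hij
    set F : (Fin d → ℚ) →ₗ[ℚ] ℚ := ∑ k ∈ Finset.Icc i jj, LinearMap.proj k with hF
    have hFapp : ∀ x : Fin d → ℚ, F x = ∑ k ∈ Finset.Icc i jj, x k := by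
      intro x; rw [hF]; simp
    have hker : ∀ v ∈ ((fun j : Fin (d + 1) => fun i => (A i j : ℚ)) '' ↑s),
        v ∈ LinearMap.ker F := by
      rintro v ⟨m, hm, rfl⟩
      have hms : m ∈ s := hm
      have hmpq : m ∉ ({p, q} : Finset (Fin (d+1))) := by
        rw [← hsc]; simp [hms]
      have hmp : (m:ℕ) ≠ (p:ℕ) := fun h => hmpq (by simp [Fin.ext_iff.2 h])
      have hmq : (m:ℕ) ≠ (q:ℕ) := fun h => hmpq (by simp [Fin.ext_iff.2 h])
      rw [LinearMap.mem_ker, hFapp]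
      rw [fin_sum_Icc i jj (fun k => (A k m : ℚ))]
      have hIcc : Finset.Icc (i:ℕ) (jj:ℕ) = Finset.Ico (p:ℕ) (q:ℕ) := by
        show Finset.Icc (p:ℕ) ((q:ℕ)-1) = _
        rw [← Finset.Ico_add_one_right_eq_Icc]
        congr 1
        omega
      rw [hIcc]
      set F' : ℕ → ℚ := fun t => if (m:ℕ) = t then 1 else 0 with hF'
      have hcongr : ∀ k ∈ Finset.Ico (p:ℕ) (q:ℕ),
          (if h : k < d then ((A ⟨k,h⟩ m : ℚ)) else 0) = F' k - F' (k+1) := by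
        intro k hk
        have hkd : k < d := by
          have := Finset.mem_Ico.1 hk; omega
        rw [dif_pos hkd, hA]
        push_cast
        rw [hF']
        by_cases h1 : (m:ℕ) = k <;> by_cases h2 : (m:ℕ) = k+1
        · omega
        all_goals simp [Fin.ext_iff, h1, h2]
      rw [Finset.sum_congr rfl hcongr, telescope _ _ hpqn.le]
      simp [hF', hmp, hmq]
    have hle : Submodule.span ℚ ((fun j : Fin (d + 1) => fun i => (A i j : ℚ)) '' ↑s)
        ≤ LinearMap.ker F := Submodule.span_le.2 hker
    have h0 : F (fun i => (θ i : ℚ)) = 0 := hle hmem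
    rw [hFapp] at h0
    apply hne
    have : ((∑ k ∈ Finset.Icc i jj, θ k : ℤ) : ℚ) = 0 := by
      push_cast
      exact h0
    exact_mod_cast this
end
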